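/- If δ = κ_L = κ_R, δ_L = δ_R = κ_{LR} = 1, and n ≥ 3 is odd, then the quotient of the presented algebra A_{n}ʹ (with generators E_0,…,E_n and the two-boundary TL relations plus topological relations) by the ideal generated by E_0 − 1 and E_n − 1 is isomorphic to the Temperley–Lieb algebra TL_n with loop parameter δ. -/

import Mathlib

open FreeAlgebra

/-- The six parameters `δ, δ_L, δ_R, κ_L, κ_R, κ_{LR}` of the symplectic blob algebra. -/
structure Params (k : Type*) where
  δ : k
  δL : k
  δR : k
  κL : k
  κR : k
  κLR : k

/-- The word `I`: the product of the odd-indexed generators `E_1 E_3 ⋯`. -/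
def Iword (n : ℕ) : List (Fin (n + 1)) :=
  (List.finRange (n + 1)).filter (fun i => i.val % 2 = 1)

/-- The word `J`: the product of the even-indexed generators `E_0 E_2 ⋯`. -/
def Jword (n : ℕ) : List (Fin (n + 1)) :=
  (List.finRange (n + 1)).filter (fun i => i.val % 2 = 0)

/-- The monomial in the free algebra corresponding to a word in the generators. -/
def wordProd (k : Type*) [CommRing k] {n : ℕ} (u : List (Fin (n + 1))) :
    FreeAlgebra k (Fin (n + 1)) :=
  (u.map (FreeAlgebra.ι k)).prod

/-- The defining relations of the algebra `A_n` (the quotient of the two boundary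
Temperley–Lieb algebra by the topological relations `IJI = κ_{LR} I`, `JIJ = κ_{LR} J`),
with `E = E_0` and `F = E_n`. -/
inductive SBRel {k : Type*} [CommRing k] {n : ℕ} (p : Params k) :
    FreeAlgebra k (Fin (n + 1)) → FreeAlgebra k (Fin (n + 1)) → Prop
  | comm (i j : Fin (n + 1)) (h : i.val + 1 < j.val) :
      SBRel p (ι k i * ι k j) (ι k j * ι k i)
  | left_sq :
      SBRel p (ι k (0 : Fin (n + 1)) * ι k 0) (p.δL • ι k (0 : Fin (n + 1)))
  | right_sq :
      SBRel p (ι k (Fin.last n) * ι k (Fin.last n)) (p.δR • ι k (Fin.last n))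
  | mid_sq (i : Fin (n + 1)) (h1 : 1 ≤ i.val) (h2 : i.val < n) :
      SBRel p (ι k i * ι k i) (p.δ • ι k i)
  | left_braid (i j : Fin (n + 1)) (hi : i.val = 1) (hj : j.val = 0) :
      SBRel p (ι k i * ι k j * ι k i) (p.κL • ι k i)
  | right_braid (i j : Fin (n + 1)) (hi : i.val + 1 = n) (hj : j.val = n) :
      SBRel p (ι k i * ι k j * ι k i) (p.κR • ι k i)
  | braid_up (i j : Fin (n + 1)) (h : i.val + 1 = j.val) (h1 : 1 ≤ i.val) (h2 : j.val < n) :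
      SBRel p (ι k i * ι k j * ι k i) (ι k i)
  | braid_down (i j : Fin (n + 1)) (h : i.val + 1 = j.val) (h1 : 1 ≤ i.val) (h2 : j.val < n) :
      SBRel p (ι k j * ι k i * ι k j) (ι k j)
  | topI :
      SBRel p (wordProd k (Iword n ++ Jword n ++ Iword n)) (p.κLR • wordProd k (Iword n))
  | topJ :
      SBRel p (wordProd k (Jword n ++ Iword n ++ Jword n)) (p.κLR • wordProd k (Jword n))

/-- The presented algebra `A_n`. -/
def SBAlg (k : Type*) [CommRing k] (n : ℕ) (p : Params k) :=
  RingQuot (SBRel (k := k) (n := n) p)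

noncomputable instance (k : Type*) [CommRing k] (n : ℕ) (p : Params k) :
    Ring (SBAlg k n p) := inferInstanceAs (Ring (RingQuot (SBRel p)))

noncomputable instance (k : Type*) [CommRing k] (n : ℕ) (p : Params k) :
    Algebra k (SBAlg k n p) := inferInstanceAs (Algebra k (RingQuot (SBRel p)))

/-- The image of a word in the generators in the algebra `A_n`. -/
noncomputable def algWord {k : Type*} [CommRing k] {n : ℕ} (p : Params k)
    (u : List (Fin (n + 1))) : SBAlg k n p :=
  RingQuot.mkAlgHom k (SBRel p) (wordProd k u)

/-- The generator `E_i` of `A_n`. -/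
noncomputable def gen {k : Type*} [CommRing k] {n : ℕ} (p : Params k) (i : Fin (n + 1)) :
    SBAlg k n p :=
  RingQuot.mkAlgHom k (SBRel p) (ι k i)

/-- A monomial `u` in the generators is *reduced* if it cannot be expressed, using the
relations, as a scalar multiple of a strictly shorter monomial. -/
def Reduced {k : Type*} [CommRing k] {n : ℕ} (p : Params k) (u : List (Fin (n + 1))) :
    Prop :=
  ∀ (v : List (Fin (n + 1))) (c : k), v.length < u.length → algWord p u ≠ c • algWord p v

/-- The generators `E_i` and `E_j` do not commute: `|i - j| = 1`. -/
def Adj {n : ℕ} (i j : Fin (n + 1)) : Prop :=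
  i.val + 1 = j.val ∨ j.val + 1 = i.val

/-- The defining relations of the Temperley–Lieb algebra `TL` on `m` generators
`U_1, …, U_m` (indexed here by `Fin m`): `U_i² = δ U_i`, distant commutation, and
`U_i U_{i±1} U_i = U_i`. -/
inductive TLRel (k : Type*) [CommRing k] (m : ℕ) (δ : k) :
    FreeAlgebra k (Fin m) → FreeAlgebra k (Fin m) → Prop
  | sq (i : Fin m) : TLRel k m δ (ι k i * ι k i) (δ • ι k i)
  | comm (i j : Fin m) (h : i.val + 1 < j.val) :
      TLRel k m δ (ι k i * ι k j) (ι k j * ι k i)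
  | braid (i j : Fin m) (h : i.val + 1 = j.val ∨ j.val + 1 = i.val) :
      TLRel k m δ (ι k i * ι k j * ι k i) (ι k i)

/-- The Temperley–Lieb algebra `TL_n` with loop parameter `δ`
(on `n - 1` generators when `m = n - 1`). -/
def TLAlg (k : Type*) [CommRing k] (m : ℕ) (δ : k) := RingQuot (TLRel k m δ)

noncomputable instance (k : Type*) [CommRing k] (m : ℕ) (δ : k) :
    Ring (TLAlg k m δ) := inferInstanceAs (Ring (RingQuot (TLRel k m δ)))

noncomputable instance (k : Type*) [CommRing k] (m : ℕ) (δ : k) :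
    Algebra k (TLAlg k m δ) := inferInstanceAs (Algebra k (RingQuot (TLRel k m δ)))

/-- The generator `U_j` of the Temperley–Lieb algebra. -/
noncomputable def tlGen {k : Type*} [CommRing k] {m : ℕ} (δ : k) (j : Fin m) :
    TLAlg k m δ :=
  RingQuot.mkAlgHom k (TLRel k m δ) (ι k j)

/-- The relation generating the two-sided ideal `I = (e - 1, f - 1)` of `b_n^x`. -/
def UnitQuotRel {k : Type*} [CommRing k] {n : ℕ} (p : Params k) :
    SBAlg k n p → SBAlg k n p → Prop :=
  fun x y => (x = gen p 0 ∧ y = 1) ∨ (x = gen p (Fin.last n) ∧ y = 1)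

noncomputable instance {k : Type*} [CommRing k] {n : ℕ} (p : Params k) :
    Algebra k (RingQuot (UnitQuotRel (k := k) (n := n) p)) :=
  inferInstanceAs (Algebra k (RingQuot (UnitQuotRel p)))

/-!
Send `E_0` and `E_n` to `1` and `E_i` to `U_i` for `0 < i < n`. All local relations of `A_n`
then become Temperley–Lieb relations (with `U_1 E_0 U_1 = U_1² = δ U_1` accounting for
`κ_L = δ`). For odd `n = 2p + 1` the words `I` and `J` become `A = U_1 U_3 ⋯ U_{2p-1}` and
`B = U_2 U_4 ⋯ U_{2p}`, and `ABA = A`, `BAB = B` hold in any Temperley–Lieb monoid: peel off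
the outermost generator `x` of `A` (resp. `B`), which commutes with everything else except
its neighbour `y` in the other word, so `xyx = x` and induction finish. The inverse map is
`U_i ↦ E_i`, and both composites fix the generators.
-/

section TemperleyLiebMonoid

variable {M : Type*} [Monoid M]

structure IsTLFamily (U : ℕ → M) (N : ℕ) : Prop where
  commute : ∀ i j, i + 1 < j → j < N → Commute (U i) (U j)
  braid_succ : ∀ i, i + 1 < N → U i * U (i + 1) * U i = U i
  braid_pred : ∀ i, i + 1 < N → U (i + 1) * U i * U (i + 1) = U (i + 1)

def altProd (U : ℕ → M) (s len : ℕ) : M :=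
  ((List.range len).map fun t => U (s + 2 * t)).prod

variable (U : ℕ → M)

@[simp]
lemma altProd_zero (s : ℕ) : altProd U s 0 = 1 := rfl

lemma altProd_succ (s len : ℕ) : altProd U s (len + 1) = U s * altProd U (s + 2) len := by
  simp only [altProd, List.prod_range_succ']
  congr 3 with t
  congr 1
  omega

lemma altProd_succ' (s len : ℕ) :
    altProd U s (len + 1) = altProd U s len * U (s + 2 * len) :=
  List.prod_range_succ _ _

variable {U}

lemma Commute.altProd_right {x : M} {s len : ℕ} (h : ∀ t < len, Commute x (U (s + 2 * t))) :
    Commute x (altProd U s len) :=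
  Commute.list_prod_right _ _ <| by simpa using h

lemma mul_mul_mul_eq_of_commute {x y z w : M} (hz : Commute x z) (hw : Commute x w)
    (hx : x * y * x = x) (h : z * w * z = z) : x * z * (y * w) * (x * z) = x * z :=
  calc x * z * (y * w) * (x * z) = z * (x * y * (w * x)) * z := by
        simp only [mul_assoc]; rw [hz.left_comm]
    _ = z * (x * y * x) * (w * z) := by rw [← hw.eq]; simp only [mul_assoc]
    _ = x * (z * w * z) := by rw [hx, ← hz.eq]; simp only [mul_assoc]
    _ = x * z := by rw [h]

lemma mul_mul_mul_eq_of_commute' {x y z w : M} (hz : Commute x z) (hw : Commute x w)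
    (hx : x * y * x = x) (h : z * w * z = z) : z * x * (w * y) * (z * x) = z * x :=
  calc z * x * (w * y) * (z * x) = z * (x * w) * y * (x * z) := by
        rw [hz.eq]; simp only [mul_assoc]
    _ = z * w * (x * y * x) * z := by rw [hw.eq]; simp only [mul_assoc]
    _ = z * x := by rw [hx, mul_assoc (z * w), hz.eq, ← mul_assoc, h]

namespace IsTLFamily

variable {N : ℕ} (hU : IsTLFamily U N)
include hU

lemma altProd_mul_altProd_succ_mul_altProd {s len : ℕ} (h : s + 2 * len ≤ N) :
    altProd U s len * altProd U (s + 1) len * altProd U s len = altProd U s len := by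
  induction len generalizing s with
  | zero => simp
  | succ len ih =>
    rw [altProd_succ U s, altProd_succ U (s + 1)]
    refine mul_mul_mul_eq_of_commute ?_ ?_ (hU.braid_succ s (by omega)) (ih (by omega))
    · exact Commute.altProd_right fun t ht => hU.commute _ _ (by omega) (by omega)
    · exact Commute.altProd_right fun t ht => hU.commute _ _ (by omega) (by omega)

lemma altProd_succ_mul_altProd_mul_altProd_succ {s len : ℕ} (h : s + 2 * len ≤ N) :
    altProd U (s + 1) len * altProd U s len * altProd U (s + 1) len = altProd U (s + 1) len := by
  induction len with
  | zero => simp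
  | succ len ih =>
    rw [altProd_succ' U s, altProd_succ' U (s + 1)]
    refine mul_mul_mul_eq_of_commute' ?_ ?_ ?_ (ih (by omega))
    · exact Commute.altProd_right fun t ht => (hU.commute _ _ (by omega) (by omega)).symm
    · exact Commute.altProd_right fun t ht => (hU.commute _ _ (by omega) (by omega)).symm
    · have := hU.braid_pred (s + 2 * len) (by omega)
      rwa [show s + 2 * len + 1 = s + 1 + 2 * len by omega] at this

end IsTLFamily

end TemperleyLiebMonoid

section TemperleyLieb

variable {k : Type*} [CommRing k] {m : ℕ} (δ : k)

lemma tlGen_mul_self (i : Fin m) : tlGen δ i * tlGen δ i = δ • tlGen δ i := by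
  have h := RingQuot.mkAlgHom_rel k (TLRel.sq (δ := δ) i)
  rwa [map_mul, map_smul] at h

lemma commute_tlGen {i j : Fin m} (hij : i.val + 1 < j.val) :
    Commute (tlGen δ i) (tlGen δ j) := by
  have h := RingQuot.mkAlgHom_rel k (TLRel.comm (δ := δ) i j hij)
  rwa [map_mul, map_mul] at h

lemma tlGen_mul_tlGen_mul_tlGen {i j : Fin m} (hij : i.val + 1 = j.val ∨ j.val + 1 = i.val) :
    tlGen δ i * tlGen δ j * tlGen δ i = tlGen δ i := by
  have h := RingQuot.mkAlgHom_rel k (TLRel.braid (δ := δ) i j hij)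
  rwa [map_mul, map_mul] at h

/-- `U_i` in the `1`-based indexing of `TL_{m+1}`, extended by `U_0 = U_{m+1} = 1`. -/
noncomputable def tlGenNat (i : ℕ) : TLAlg k m δ :=
  if h : 0 < i ∧ i ≤ m then tlGen δ ⟨i - 1, by omega⟩ else 1

lemma tlGenNat_of_mem {i : ℕ} (h : 0 < i ∧ i ≤ m) :
    tlGenNat δ i = tlGen δ (⟨i - 1, by omega⟩ : Fin m) :=
  dif_pos h

lemma tlGenNat_of_not_mem {i : ℕ} (h : ¬(0 < i ∧ i ≤ m)) : tlGenNat (m := m) δ i = 1 :=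
  dif_neg h

lemma tlGenNat_succ (j : Fin m) : tlGenNat δ (j + 1) = tlGen δ j :=
  tlGenNat_of_mem δ (by omega)

lemma tlGenNat_mul_self {i : ℕ} (h : 0 < i ∧ i ≤ m) :
    tlGenNat (m := m) δ i * tlGenNat δ i = δ • tlGenNat δ i := by
  rw [tlGenNat_of_mem δ h]
  exact tlGen_mul_self δ _

lemma commute_tlGenNat {i j : ℕ} (h : i + 1 < j) :
    Commute (tlGenNat (m := m) δ i) (tlGenNat δ j) := by
  by_cases hi : 0 < i ∧ i ≤ m
  · by_cases hj : 0 < j ∧ j ≤ m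
    · rw [tlGenNat_of_mem δ hi, tlGenNat_of_mem δ hj]
      exact commute_tlGen δ (by simp only; omega)
    · rw [tlGenNat_of_not_mem δ hj]
      exact Commute.one_right _
  · rw [tlGenNat_of_not_mem δ hi]
    exact Commute.one_left _

lemma tlGenNat_mul_tlGenNat_mul_tlGenNat {i j : ℕ} (hi : 0 < i ∧ i ≤ m)
    (hj : 0 < j ∧ j ≤ m) (h : i + 1 = j ∨ j + 1 = i) :
    tlGenNat (m := m) δ i * tlGenNat δ j * tlGenNat δ i = tlGenNat δ i := by
  rw [tlGenNat_of_mem δ hi, tlGenNat_of_mem δ hj]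
  exact tlGen_mul_tlGen_mul_tlGen δ (by simp only; omega)

lemma isTLFamily_tlGenNat : IsTLFamily (fun i => tlGenNat (m := m) δ (i + 1)) m where
  commute _ _ h _ := commute_tlGenNat δ (by omega)
  braid_succ _ h := tlGenNat_mul_tlGenNat_mul_tlGenNat δ (by omega) (by omega) (by omega)
  braid_pred _ h := tlGenNat_mul_tlGenNat_mul_tlGenNat δ (by omega) (by omega) (by omega)

end TemperleyLieb

lemma List.range_two_mul_filter_odd (q : ℕ) :
    (List.range (2 * q)).filter (fun v => v % 2 = 1) = (List.range q).map (2 * · + 1) := by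
  induction q with
  | zero => rfl
  | succ q ih =>
    rw [show 2 * (q + 1) = 2 * q + 1 + 1 by ring, List.range_succ, List.range_succ,
      List.filter_append, List.filter_append, ih, List.range_succ, List.map_append]
    simp

lemma List.range_two_mul_filter_even (q : ℕ) :
    (List.range (2 * q)).filter (fun v => v % 2 = 0) = (List.range q).map (2 * ·) := by
  induction q with
  | zero => rfl
  | succ q ih =>
    rw [show 2 * (q + 1) = 2 * q + 1 + 1 by ring, List.range_succ, List.range_succ,
      List.filter_append, List.filter_append, ih, List.range_succ, List.map_append]
    simp

lemma Iword_map_val {n p : ℕ} (hp : n = 2 * p + 1) :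
    (Iword n).map Fin.val = (List.range (p + 1)).map (2 * · + 1) := by
  rw [Iword, show (fun i : Fin (n + 1) => decide (i.val % 2 = 1)) =
      (fun v => decide (v % 2 = 1)) ∘ Fin.val from rfl, ← List.filter_map,
    List.map_coe_finRange_eq_range, show n + 1 = 2 * (p + 1) by omega,
    List.range_two_mul_filter_odd]

lemma Jword_map_val {n p : ℕ} (hp : n = 2 * p + 1) :
    (Jword n).map Fin.val = (List.range (p + 1)).map (2 * ·) := by
  rw [Jword, show (fun i : Fin (n + 1) => decide (i.val % 2 = 0)) =
      (fun v => decide (v % 2 = 0)) ∘ Fin.val from rfl, ← List.filter_map,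
    List.map_coe_finRange_eq_range, show n + 1 = 2 * (p + 1) by omega,
    List.range_two_mul_filter_even]

section Isomorphism

variable {k : Type*} [CommRing k] (δ : k) (n : ℕ)

abbrev tlParams : Params k := ⟨δ, 1, 1, δ, δ, 1⟩

noncomputable def toTLFree : FreeAlgebra k (Fin (n + 1)) →ₐ[k] TLAlg k (n - 1) δ :=
  FreeAlgebra.lift k fun i => tlGenNat δ i

lemma toTLFree_ι (i : Fin (n + 1)) : toTLFree δ n (ι k i) = tlGenNat δ i :=
  FreeAlgebra.lift_ι_apply _ _

lemma toTLFree_wordProd (u : List (Fin (n + 1))) :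
    toTLFree δ n (wordProd k u) = ((u.map Fin.val).map (tlGenNat δ)).prod := by
  simp only [wordProd, map_list_prod, List.map_map]
  congr 1
  exact List.map_congr_left fun i _ => toTLFree_ι δ n i

variable {n}

lemma wordProd_append (u v : List (Fin (n + 1))) :
    wordProd k (u ++ v) = wordProd k u * wordProd k v := by
  simp only [wordProd, List.map_append, List.prod_append]

lemma toTLFree_Iword {p : ℕ} (hp : n = 2 * p + 1) :
    toTLFree δ n (wordProd k (Iword n)) = altProd (fun i => tlGenNat δ (i + 1)) 0 p := by
  rw [toTLFree_wordProd, Iword_map_val hp, List.map_map, List.prod_range_succ,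
    Function.comp_apply, ← hp, tlGenNat_of_not_mem δ (by omega), mul_one]
  simp [altProd, Function.comp_def]

lemma toTLFree_Jword {p : ℕ} (hp : n = 2 * p + 1) :
    toTLFree δ n (wordProd k (Jword n)) = altProd (fun i => tlGenNat δ (i + 1)) 1 p := by
  rw [toTLFree_wordProd, Jword_map_val hp, List.map_map, List.prod_range_succ',
    Function.comp_apply, tlGenNat_of_not_mem δ (by omega), one_mul]
  simp only [altProd, Function.comp_def]
  congr 2 with t
  congr 1
  omega

lemma toTLFree_sbRel (hn : 3 ≤ n) (hodd : Odd n) ⦃x y : FreeAlgebra k (Fin (n + 1))⦄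
    (h : SBRel (tlParams δ) x y) : toTLFree δ n x = toTLFree δ n y := by
  obtain ⟨p, hp⟩ := hodd
  have hU := isTLFamily_tlGenNat (m := n - 1) δ
  cases h with
  | comm i j h => simpa [toTLFree_ι] using (commute_tlGenNat δ h).eq
  | left_sq => simp [toTLFree_ι, tlGenNat_of_not_mem]
  | right_sq => simp [toTLFree_ι, tlGenNat_of_not_mem]
  | mid_sq i h1 h2 => simpa [toTLFree_ι] using tlGenNat_mul_self δ (i := i) (by omega)
  | left_braid i j hi hj =>
    simpa [toTLFree_ι, hi, hj, tlGenNat_of_not_mem] using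
      tlGenNat_mul_self δ (i := 1) (by omega)
  | right_braid i j hi hj =>
    simpa [toTLFree_ι, hj, tlGenNat_of_not_mem] using tlGenNat_mul_self δ (i := i) (by omega)
  | braid_up i j h h1 h2 =>
    simpa [toTLFree_ι] using
      tlGenNat_mul_tlGenNat_mul_tlGenNat δ (i := i) (j := j) (by omega) (by omega) (by omega)
  | braid_down i j h h1 h2 =>
    simpa [toTLFree_ι] using
      tlGenNat_mul_tlGenNat_mul_tlGenNat δ (i := j) (j := i) (by omega) (by omega) (by omega)
  | topI =>
    simp only [wordProd_append, map_mul, toTLFree_Iword δ hp, toTLFree_Jword δ hp, one_smul]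
    exact hU.altProd_mul_altProd_succ_mul_altProd (by omega)
  | topJ =>
    simp only [wordProd_append, map_mul, toTLFree_Iword δ hp, toTLFree_Jword δ hp, one_smul]
    exact hU.altProd_succ_mul_altProd_mul_altProd_succ (by omega)

noncomputable def sbToTL (hn : 3 ≤ n) (hodd : Odd n) :
    SBAlg k n (tlParams δ) →ₐ[k] TLAlg k (n - 1) δ :=
  RingQuot.liftAlgHom k ⟨toTLFree δ n, toTLFree_sbRel δ hn hodd⟩

lemma sbToTL_gen (hn : 3 ≤ n) (hodd : Odd n) (i : Fin (n + 1)) :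
    sbToTL δ hn hodd (gen (tlParams δ) i) = tlGenNat δ i :=
  (RingQuot.liftAlgHom_mkAlgHom_apply k _ _ _).trans (toTLFree_ι δ n i)

noncomputable def toTL (hn : 3 ≤ n) (hodd : Odd n) :
    RingQuot (UnitQuotRel (k := k) (n := n) (tlParams δ)) →ₐ[k] TLAlg k (n - 1) δ :=
  RingQuot.liftAlgHom k ⟨sbToTL δ hn hodd, by
    rintro _ _ (⟨rfl, rfl⟩ | ⟨rfl, rfl⟩) <;>
      rw [sbToTL_gen, map_one, tlGenNat_of_not_mem δ (by simp)]⟩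

variable (n)

noncomputable def quotMk :
    FreeAlgebra k (Fin (n + 1)) →ₐ[k] RingQuot (UnitQuotRel (k := k) (n := n) (tlParams δ)) :=
  (RingQuot.mkAlgHom k _).comp (RingQuot.mkAlgHom k _)

lemma quotMk_sbRel {x y : FreeAlgebra k (Fin (n + 1))} (h : SBRel (tlParams δ) x y) :
    quotMk δ n x = quotMk δ n y :=
  congrArg (RingQuot.mkAlgHom k _) (RingQuot.mkAlgHom_rel k h)

lemma quotMk_ι_of_not_mem {i : Fin (n + 1)} (hi : ¬(0 < i.val ∧ i.val < n)) :
    quotMk δ n (ι k i) = 1 := by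
  have hrel : UnitQuotRel (tlParams δ) (gen (tlParams δ) i) 1 := by
    rcases (by simp only [Fin.ext_iff, Fin.val_zero, Fin.val_last]; omega :
      i = 0 ∨ i = Fin.last n) with rfl | rfl
    exacts [Or.inl ⟨rfl, rfl⟩, Or.inr ⟨rfl, rfl⟩]
  exact (RingQuot.mkAlgHom_rel k hrel).trans (map_one _)

lemma toTL_quotMk_ι (hn : 3 ≤ n) (hodd : Odd n) (i : Fin (n + 1)) :
    toTL δ hn hodd (quotMk δ n (ι k i)) = tlGenNat δ i :=
  (RingQuot.liftAlgHom_mkAlgHom_apply k _ _ _).trans (sbToTL_gen δ hn hodd i)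

noncomputable def ofTLFree :
    FreeAlgebra k (Fin (n - 1)) →ₐ[k] RingQuot (UnitQuotRel (k := k) (n := n) (tlParams δ)) :=
  FreeAlgebra.lift k fun j => quotMk δ n (ι k ⟨j + 1, by omega⟩)

lemma ofTLFree_tlRel ⦃x y : FreeAlgebra k (Fin (n - 1))⦄ (h : TLRel k (n - 1) δ x y) :
    ofTLFree δ n x = ofTLFree δ n y := by
  cases h with
  | sq i =>
    simpa [ofTLFree] using
      quotMk_sbRel δ n (SBRel.mid_sq ⟨i + 1, by omega⟩ (by simp) (by simp; omega))
  | comm i j h =>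
    simpa [ofTLFree] using
      quotMk_sbRel δ n (SBRel.comm ⟨i + 1, by omega⟩ ⟨j + 1, by omega⟩ (by simp; omega))
  | braid i j h =>
    rcases h with h | h
    · simpa [ofTLFree] using quotMk_sbRel δ n
        (SBRel.braid_up ⟨i + 1, by omega⟩ ⟨j + 1, by omega⟩ (by simp; omega) (by simp)
          (by simp; omega))
    · simpa [ofTLFree] using quotMk_sbRel δ n
        (SBRel.braid_down ⟨j + 1, by omega⟩ ⟨i + 1, by omega⟩ (by simp; omega) (by simp)
          (by simp; omega))

noncomputable def ofTL :
    TLAlg k (n - 1) δ →ₐ[k] RingQuot (UnitQuotRel (k := k) (n := n) (tlParams δ)) :=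
  RingQuot.liftAlgHom k ⟨ofTLFree δ n, ofTLFree_tlRel δ n⟩

lemma ofTL_tlGen (j : Fin (n - 1)) :
    ofTL δ n (tlGen δ j) = quotMk δ n (ι k ⟨j + 1, by omega⟩) :=
  (RingQuot.liftAlgHom_mkAlgHom_apply k _ _ _).trans (FreeAlgebra.lift_ι_apply _ _)

lemma ofTL_tlGenNat (i : Fin (n + 1)) : ofTL δ n (tlGenNat δ i) = quotMk δ n (ι k i) := by
  by_cases hi : 0 < i.val ∧ i.val < n
  · rw [tlGenNat_of_mem δ (by omega), ofTL_tlGen]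
    congr
    dsimp only
    omega
  · rw [tlGenNat_of_not_mem δ (by omega), map_one, quotMk_ι_of_not_mem δ n hi]

end Isomorphism

/-- If `δ = κ_L = κ_R`, `δ_L = δ_R = κ_{LR} = 1` and `n ≥ 3` is odd, then
`b_n^x / I ≅ TL_n`, where `I` is the ideal generated by `e - 1` and `f - 1` and `TL_n`
has loop parameter `δ` (with `q + q⁻¹ = δ`). -/
theorem quotient_iso_TL {k : Type*} [Field k] (n : ℕ) (hn : 3 ≤ n) (hodd : Odd n)
    (δ : k) :
    Nonempty
      (RingQuot (UnitQuotRel (k := k) (n := n) (⟨δ, 1, 1, δ, δ, 1⟩ : Params k)) ≃ₐ[k]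
        TLAlg k (n - 1) δ) := by
  refine ⟨AlgEquiv.ofAlgHom (toTL δ hn hodd) (ofTL δ n) ?_ ?_⟩
  · refine RingQuot.ringQuot_ext' _ _ _ (FreeAlgebra.hom_ext (funext fun j => ?_))
    change toTL δ hn hodd (ofTL δ n (tlGen δ j)) = tlGen δ j
    rw [ofTL_tlGen, toTL_quotMk_ι, tlGenNat_succ]
  · refine RingQuot.ringQuot_ext' _ _ _ <| RingQuot.ringQuot_ext' _ _ _ <|
      FreeAlgebra.hom_ext (funext fun i => ?_)
    change ofTL δ n (toTL δ hn hodd (quotMk δ n (ι k i))) = quotMk δ n (ι k i)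
    rw [toTL_quotMk_ι, ofTL_tlGenNat]
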